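/- Let G be a finite simple graph and v a vertex of G. If Ω is a potential maximal clique of the induced subgraph G \ {v}, then exactly one of the two sets Ω and Ω ∪ {v} is a potential maximal clique of G. -/

import Mathlib

open scoped Classical

namespace PaperECC

variable {V : Type*}

/-- `nbhd G X` is N(X): vertices outside `X` with a neighbor in `X`. -/
def nbhd (G : SimpleGraph V) (X : Set V) : Set V :=
  {v | v ∉ X ∧ ∃ u ∈ X, G.Adj u v}

/-- `closedNbhd G X` is N[X] = X ∪ N(X). -/
def closedNbhd (G : SimpleGraph V) (X : Set V) : Set V :=
  X ∪ nbhd G X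

/-- closed neighborhood N[v] of a single vertex. -/
def vNbhd (G : SimpleGraph V) (v : V) : Set V :=
  insert v (G.neighborSet v)

/-- `IsCompOf G X C`: `C` is the vertex set of a connected component of `G \ X`. -/
def IsCompOf (G : SimpleGraph V) (X C : Set V) : Prop :=
  C.Nonempty ∧ Disjoint C X ∧ (G.induce C).Connected ∧
    ∀ u ∈ C, ∀ v, v ∉ X → G.Adj u v → v ∈ C

/-- `C` is a full component of `X`: a component of `G \ X` with N(C) = X. -/
def IsFullCompOf (G : SimpleGraph V) (X C : Set V) : Prop :=
  IsCompOf G X C ∧ nbhd G C = X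

/-- `S` is a minimal separator of `G`: it has at least two full components. -/
def IsMinSep (G : SimpleGraph V) (S : Set V) : Prop :=
  ∃ C D : Set V, C ≠ D ∧ IsFullCompOf G S C ∧ IsFullCompOf G S D

/-- `C` is a block of `G`: a component of `G \ N(C)` whose neighborhood is a minimal separator. -/
def IsBlock (G : SimpleGraph V) (C : Set V) : Prop :=
  IsCompOf G (nbhd G C) C ∧ IsMinSep G (nbhd G C)

/-- `H` is chordal: every (injectively embedded) cycle on at least 4 vertices has a chord,
i.e. there is no induced cycle on four or more vertices. -/
def IsChordal (H : SimpleGraph V) : Prop :=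
  ∀ n : ℕ, 4 ≤ n → ∀ f : ZMod n → V, Function.Injective f →
    (∀ i, H.Adj (f i) (f (i + 1))) →
    ∃ i j : ZMod n, i ≠ j ∧ j ≠ i + 1 ∧ i ≠ j + 1 ∧ H.Adj (f i) (f j)

/-- `H` is a triangulation of `G` (on the same vertex set). -/
def IsTri (G H : SimpleGraph V) : Prop :=
  IsChordal H ∧ G ≤ H

/-- `H` is a minimal triangulation of `G`. -/
def IsMinTri (G H : SimpleGraph V) : Prop :=
  IsTri G H ∧ ∀ H' : SimpleGraph V, IsTri G H' → H' ≤ H → H' = H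

/-- `Ω` is a maximal clique of `H`. -/
def IsMaxClique (H : SimpleGraph V) (Ω : Set V) : Prop :=
  H.IsClique Ω ∧ ∀ Ω' : Set V, H.IsClique Ω' → Ω ⊆ Ω' → Ω' = Ω

/-- `Ω` is a potential maximal clique of `G`: a maximal clique of some minimal triangulation. -/
def IsPMC (G : SimpleGraph V) (Ω : Set V) : Prop :=
  ∃ H : SimpleGraph V, IsMinTri G H ∧ IsMaxClique H Ω

/-- `W` is an edge clique cover of `G`: a finite collection of cliques covering all edges. -/
def IsECC (G : SimpleGraph V) (W : Finset (Set V)) : Prop :=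
  (∀ K ∈ W, G.IsClique K) ∧ ∀ u v : V, G.Adj u v → ∃ K ∈ W, u ∈ K ∧ v ∈ K

/-- `W[X]`: the cliques of `W` intersecting the vertex set `X`. -/
noncomputable def meeting (W : Finset (Set V)) (X : Set V) : Finset (Set V) :=
  W.filter (fun K => (K ∩ X).Nonempty)

/-- `V(G, W')`: the vertices all of whose cliques (within `W`) belong to `W'`. -/
def partVerts (W W' : Finset (Set V)) : Set V :=
  {v | ∀ K ∈ W, v ∈ K → K ∈ W'}

/-- The connected components of the subgraph of `G` induced on a vertex set `Y`. -/
def compsOf (G : SimpleGraph V) (Y : Set V) : Set (Set V) :=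
  {C | IsCompOf G Yᶜ C}

/-- `C(W')`: the components of the part `W'` of the edge clique cover `W`. -/
def partComps (G : SimpleGraph V) (W W' : Finset (Set V)) : Set (Set V) :=
  compsOf G (partVerts W W')

/-- `W'` is a good part of `W`: a nonempty subset all of whose components are blocks of `G`. -/
def IsGoodPart (G : SimpleGraph V) (W W' : Finset (Set V)) : Prop :=
  W' ⊆ W ∧ W'.Nonempty ∧ ∀ C ∈ partComps G W W', IsBlock G C

/-- The realization `R(C)` of a block `C`, as a graph supported on `N[C]`:
edges of `G[N[C]]` together with all pairs inside `N(C)`. -/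
def realization (G : SimpleGraph V) (C : Set V) : SimpleGraph V where
  Adj u v := u ≠ v ∧ u ∈ closedNbhd G C ∧ v ∈ closedNbhd G C ∧
    (G.Adj u v ∨ (u ∈ nbhd G C ∧ v ∈ nbhd G C))
  symm := ⟨by
    intro u v h
    exact ⟨h.1.symm, h.2.2.1, h.2.1, h.2.2.2.elim (fun a => Or.inl a.symm)
      (fun a => Or.inr ⟨a.2, a.1⟩)⟩⟩
  loopless := ⟨fun u h => h.1 rfl⟩

/-- The complete graph on the vertex set `Ω` (supported on `Ω`): all pairs inside `Ω`. -/
def cliqueOn (Ω : Set V) : SimpleGraph V where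
  Adj u v := u ≠ v ∧ u ∈ Ω ∧ v ∈ Ω
  symm := ⟨fun u v h => ⟨h.1.symm, h.2.2, h.2.1⟩⟩
  loopless := ⟨fun u h => h.1 rfl⟩

/-- The induced subgraph `G[A]`, as a graph supported on `A`. -/
def inducedOn (G : SimpleGraph V) (A : Set V) : SimpleGraph V where
  Adj u v := G.Adj u v ∧ u ∈ A ∧ v ∈ A
  symm := ⟨fun u v h => ⟨h.1.symm, h.2.2, h.2.1⟩⟩
  loopless := ⟨fun u h => G.ne_of_adj h.1 rfl⟩

/-- All edges of `H` lie inside the vertex set `A` (i.e. `H` has vertex set `A`). -/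
def edgesWithin (H : SimpleGraph V) (A : Set V) : Prop :=
  ∀ u v : V, H.Adj u v → u ∈ A ∧ v ∈ A

/-- `H` is a triangulation of the graph `G'` with vertex set `A`. -/
def IsTriOn (G' : SimpleGraph V) (A : Set V) (H : SimpleGraph V) : Prop :=
  IsChordal H ∧ G' ≤ H ∧ edgesWithin H A

/-- `H` is a minimal triangulation of the graph `G'` with vertex set `A`. -/
def IsMinTriOn (G' : SimpleGraph V) (A : Set V) (H : SimpleGraph V) : Prop :=
  IsTriOn G' A H ∧ ∀ H' : SimpleGraph V, IsTriOn G' A H' → H' ≤ H → H' = H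

/-- `M` is a module of `G`. -/
def IsModule (G : SimpleGraph V) (M : Set V) : Prop :=
  ∀ v ∉ M, (∀ u ∈ M, G.Adj v u) ∨ (∀ u ∈ M, ¬ G.Adj v u)

/-!
Making `v` universal in a minimal triangulation `H'` of `G \ {v}` gives a triangulation of `G`. A
minimal triangulation `H` of `G` below it restricts to a chordal graph between `G \ {v}` and `H'`,
hence to `H'`, so a maximal clique of `H` containing `Ω` meets `G \ {v}` exactly in `Ω`: it is `Ω`
or `Ω ∪ {v}`.

They are not both PMCs. In a chordal graph, a connected set dominating a disjoint clique contains
a vertex adjacent to the whole clique, so a maximal clique `Ω` of a triangulation has no full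
component: some `x ∈ Ω` has no neighbour in the component `C` of `v` in `G - Ω`. Gluing two chordal
graphs along a clique gives a chordal graph, so a minimal triangulation in which `N(C) ⊆ Ω` is a
clique has no edge from `C` to a vertex outside `N[C]`; in particular `vx` is not an edge of a
minimal triangulation in which `Ω ∪ {v}` is a clique.
-/

open SimpleGraph

section Cycles

variable {H : SimpleGraph V} {n : ℕ}

lemma natCast_chord_iff {a b : ℕ} (hab : a < b) (hbn : b < n) :
    ((a : ZMod n) ≠ b ∧ (b : ZMod n) ≠ a + 1 ∧ (a : ZMod n) ≠ b + 1) ↔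
      a + 2 ≤ b ∧ ¬(a = 0 ∧ b + 1 = n) := by
  have hb1 : (b + 1) % n = if b + 1 = n then 0 else b + 1 := by
    split_ifs with h
    · rw [h, Nat.mod_self]
    · exact Nat.mod_eq_of_lt (by omega)
  simp only [← Nat.cast_add_one, ne_eq, ZMod.natCast_eq_natCast_iff', hb1,
    Nat.mod_eq_of_lt (show a < n by omega), Nat.mod_eq_of_lt hbn,
    Nat.mod_eq_of_lt (show a + 1 < n by omega)]
  split_ifs <;> omega

-- `IsChordal` indexes cycles by `ZMod n`; reading them along `ℕ` turns arcs into intervals.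
structure IsNatCycle (H : SimpleGraph V) (g : ℕ → V) (n : ℕ) : Prop where
  injOn : Set.InjOn g (Set.Iio n)
  adj : ∀ i < n, H.Adj (g i) (g (i + 1))
  closed : g n = g 0

lemma IsChordal.exists_chord_of_isNatCycle (hH : IsChordal H) (hn : 4 ≤ n) {g : ℕ → V}
    (hg : IsNatCycle H g n) :
    ∃ i j, i + 2 ≤ j ∧ j < n ∧ ¬(i = 0 ∧ j + 1 = n) ∧ H.Adj (g i) (g j) := by
  have : NeZero n := ⟨by omega⟩
  have hcyc (z : ZMod n) : H.Adj (g z.val) (g (z + 1).val) := by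
    have hz := z.val_lt
    rw [← ZMod.natCast_zmod_val z, ← Nat.cast_add_one, ZMod.val_natCast, ZMod.val_natCast,
      Nat.mod_eq_of_lt hz]
    rcases (show z.val + 1 ≤ n from hz).lt_or_eq with h | h
    · rw [Nat.mod_eq_of_lt h]
      exact hg.adj _ hz
    · rw [h, Nat.mod_self, ← hg.closed]
      simpa only [h] using hg.adj _ hz
  obtain ⟨i, j, hij, hji, hij', hadj⟩ := hH n hn (fun z => g z.val)
    (fun z w h => ZMod.val_injective n (hg.injOn z.val_lt w.val_lt h)) hcyc
  have hnat : ∀ i j : ZMod n, i.val < j.val → i ≠ j → j ≠ i + 1 → i ≠ j + 1 →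
      i.val + 2 ≤ j.val ∧ ¬(i.val = 0 ∧ j.val + 1 = n) := by
    intro i j hlt h1 h2 h3
    rw [← natCast_chord_iff hlt j.val_lt]
    simpa only [ZMod.natCast_zmod_val] using ⟨h1, h2, h3⟩
  rcases (ZMod.val_injective n).ne hij |>.lt_or_gt with h | h
  · obtain ⟨h1, h2⟩ := hnat i j h hij hji hij'
    exact ⟨_, _, h1, j.val_lt, h2, hadj⟩
  · obtain ⟨h1, h2⟩ := hnat j i h hij.symm hij' hji
    exact ⟨_, _, h1, i.val_lt, h2, hadj.symm⟩

lemma isNatCycle_of_cycle {f : ZMod n → V} (hf : Function.Injective f)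
    (hcyc : ∀ i, H.Adj (f i) (f (i + 1))) (c : ZMod n) :
    IsNatCycle H (fun k : ℕ => f (c + k)) n where
  injOn a ha b hb h := by
    have := congrArg ZMod.val (add_left_cancel (hf h))
    rwa [ZMod.val_natCast, ZMod.val_natCast, Nat.mod_eq_of_lt ha, Nat.mod_eq_of_lt hb] at this
  adj i _ := by simpa only [Nat.cast_add_one, add_assoc] using hcyc (c + i)
  closed := by simp

lemma exists_chord_of_nat {f : ZMod n → V} (c : ZMod n)
    (h : ∃ i j : ℕ, i + 2 ≤ j ∧ j < n ∧ ¬(i = 0 ∧ j + 1 = n) ∧ H.Adj (f (c + i)) (f (c + j))) :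
    ∃ i j : ZMod n, i ≠ j ∧ j ≠ i + 1 ∧ i ≠ j + 1 ∧ H.Adj (f i) (f j) := by
  obtain ⟨i, j, hij, hjn, hw, hadj⟩ := h
  obtain ⟨h1, h2, h3⟩ := (natCast_chord_iff (by omega) hjn).2 ⟨hij, hw⟩
  refine ⟨c + i, c + j, ?_, ?_, ?_, hadj⟩ <;> simpa only [ne_eq, add_assoc, add_right_inj]

end Cycles

section Closure

variable {W : Type*} {H : SimpleGraph V}

lemma IsChordal.comap (hH : IsChordal H) {f : W → V} (hf : Function.Injective f) :
    IsChordal (H.comap f) := fun n hn g hg hcyc =>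
  hH n hn (f ∘ g) (hf.comp hg) hcyc

lemma IsChordal.map (hH : IsChordal H) (e : V ↪ W) : IsChordal (H.map e) := by
  intro n hn f hf hcyc
  have hrange (i : ZMod n) : ∃ a, e a = f i := by
    obtain ⟨a, -, -, ha, -⟩ := (map_adj e H _ _).1 (hcyc i)
    exact ⟨a, ha⟩
  choose g hg using hrange
  obtain rfl : f = e ∘ g := funext fun i => (hg i).symm
  obtain ⟨i, j, h1, h2, h3, hij⟩ :=
    hH n hn g hf.of_comp fun i => map_adj_apply.1 (hcyc i)
  exact ⟨i, j, h1, h2, h3, map_adj_apply.2 hij⟩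

lemma IsChordal.sup_fromRel (hH : IsChordal H) (p : V → Prop) :
    IsChordal (H ⊔ fromRel fun a _ => p a) := by
  intro n hn f hf hcyc
  by_cases hp : ∃ i, p (f i)
  · obtain ⟨i, hi⟩ := hp
    have h02 := ((natCast_chord_iff (n := n) two_pos (by omega)).2 ⟨le_rfl, by omega⟩).1
    refine exists_chord_of_nat i ⟨0, 2, le_rfl, by omega, by omega,
      Or.inr ⟨hf.ne ?_, Or.inl (by simpa using hi)⟩⟩
    simpa only [ne_eq, add_right_inj] using h02
  · simp only [not_exists] at hp
    have hcycH (i : ZMod n) : H.Adj (f i) (f (i + 1)) := by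
      rcases hcyc i with h | ⟨-, h | h⟩
      exacts [h, absurd h (hp _), absurd h (hp _)]
    obtain ⟨i, j, h1, h2, h3, hij⟩ := hH n hn f hf hcycH
    exact ⟨i, j, h1, h2, h3, Or.inl hij⟩

lemma IsChordal.inducedOn_sup {H : SimpleGraph V} (hH : IsChordal H) {A B : Set V}
    (hAB : H.IsClique (A ∩ B)) : IsChordal (inducedOn H A ⊔ inducedOn H B) := by
  intro n hn f hf hcyc
  have hcycH (i : ZMod n) : H.Adj (f i) (f (i + 1)) := (hcyc i).elim (·.1) (·.1)
  by_cases hA : ∀ i, f i ∈ A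
  · obtain ⟨i, j, h1, h2, h3, hij⟩ := hH n hn f hf hcycH
    exact ⟨i, j, h1, h2, h3, Or.inl ⟨hij, hA i, hA j⟩⟩
  by_cases hB : ∀ i, f i ∈ B
  · obtain ⟨i, j, h1, h2, h3, hij⟩ := hH n hn f hf hcycH
    exact ⟨i, j, h1, h2, h3, Or.inr ⟨hij, hB i, hB j⟩⟩
  simp only [not_forall] at hA hB
  obtain ⟨p, hpA⟩ := hA
  obtain ⟨q, hqB⟩ := hB
  have : NeZero n := ⟨by omega⟩
  have hcross {x y : V} (h : (inducedOn H A ⊔ inducedOn H B).Adj x y) (hx : x ∉ B) : y ∈ A :=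
    h.elim (·.2.2) fun h => absurd h.2.1 hx
  -- Reading the cycle from `f q ∈ A \ B`, the first and the last vertex in `B` both lie in
  -- `A ∩ B`, and they are separated by `f p ∈ B \ A`.
  set g : ℕ → V := fun k => f (q + k) with hg_def
  have hg : IsNatCycle _ g n := isNatCycle_of_cycle hf hcyc q
  have hg0 : g 0 ∉ B := by simpa [hg_def] using hqB
  set m := (p - q).val
  have hmn : m < n := ZMod.val_lt _
  have hgm : g m ∉ A := by simpa [hg_def, m] using hpA
  have hgmB : g m ∈ B := (hcyc (q + m)).elim (fun h => absurd h.2.1 hgm) (·.2.1)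
  have hex : ∃ t, g t ∈ B := ⟨m, hgmB⟩
  set t := Nat.find hex
  have htm : t ≤ m := Nat.find_min' hex hgmB
  obtain ⟨t', ht'⟩ : ∃ t', t = t' + 1 :=
    Nat.exists_eq_succ_of_ne_zero fun h => hg0 (h ▸ Nat.find_spec hex)
  have htA : g t ∈ A := by
    rw [ht']
    exact hcross (hg.adj t' (by omega)) (Nat.find_min hex (by omega))
  set s := Nat.findGreatest (fun k => g k ∈ B) (n - 1)
  have hms : m ≤ s := Nat.le_findGreatest (by omega) hgmB
  have hsn : s ≤ n - 1 := Nat.findGreatest_le _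
  have hgs : g s ∈ B := Nat.findGreatest_spec (P := fun k => g k ∈ B) (show m ≤ n - 1 by omega) hgmB
  have hgs' : g (s + 1) ∉ B := by
    rcases (show s + 1 ≤ n by omega).lt_or_eq with h | h
    · exact Nat.findGreatest_is_greatest (Nat.lt_succ_self s) (by omega)
    · rwa [h, hg.closed]
  have hsA : g s ∈ A := hcross (hg.adj s (by omega)).symm hgs'
  have hmt : m ≠ t := fun h => hgm (h ▸ htA)
  have hms' : m ≠ s := fun h => hgm (h ▸ hsA)
  refine exists_chord_of_nat q ⟨t, s, by omega, by omega, by omega, Or.inl ⟨?_, htA, hsA⟩⟩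
  exact hAB ⟨htA, Nat.find_spec hex⟩ ⟨hsA, hgs⟩
    (hg.injOn.ne (show t < n by omega) (show s < n by omega) (by omega))

end Closure

section InducedPaths

variable {H : SimpleGraph V}

structure IsInducedPath (H : SimpleGraph V) (g : ℕ → V) (ℓ : ℕ) : Prop where
  injOn : Set.InjOn g (Set.Iic ℓ)
  adj : ∀ i < ℓ, H.Adj (g i) (g (i + 1))
  not_adj : ∀ i j, i + 2 ≤ j → j ≤ ℓ → ¬H.Adj (g i) (g j)

lemma IsInducedPath.mono {g : ℕ → V} {ℓ ℓ' : ℕ} (hg : IsInducedPath H g ℓ) (h : ℓ' ≤ ℓ) :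
    IsInducedPath H g ℓ' where
  injOn := hg.injOn.mono (Set.Iic_subset_Iic.2 h)
  adj i hi := hg.adj i (by omega)
  not_adj i j hij hj := hg.not_adj i j hij (by omega)

lemma IsInducedPath.shift {g : ℕ → V} {ℓ : ℕ} (hg : IsInducedPath H g ℓ) {s : ℕ} (hs : s ≤ ℓ) :
    IsInducedPath H (fun t => g (s + t)) (ℓ - s) where
  injOn a ha b hb h := by
    simp only [Set.mem_Iic] at ha hb
    have := hg.injOn (show s + a ≤ ℓ by omega) (show s + b ≤ ℓ by omega) h
    omega
  adj i hi := hg.adj (s + i) (by omega)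
  not_adj i j hij hj := hg.not_adj (s + i) (s + j) (by omega) (by omega)

lemma IsChordal.exists_adj_of_isInducedPath (hH : IsChordal H) {g : ℕ → V} {ℓ : ℕ}
    (hg : IsInducedPath H g ℓ) (hℓ : 2 ≤ ℓ) {b : V} (hb : ∀ t ≤ ℓ, g t ≠ b)
    (h0 : H.Adj b (g 0)) (hl : H.Adj b (g ℓ)) : ∃ t, 0 < t ∧ t < ℓ ∧ H.Adj b (g t) := by
  -- `b, g 0, …, g ℓ` is a cycle of length `ℓ + 2 ≥ 4` whose chords can only leave `b`
  set c : ℕ → V := fun k => if k = 0 ∨ k = ℓ + 2 then b else g (k - 1) with hc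
  have hcyc : IsNatCycle H c (ℓ + 2) := by
    refine ⟨fun i hi j hj h => ?_, fun i hi => ?_, by simp [hc]⟩
    · simp only [Set.mem_Iio] at hi hj
      by_cases hi0 : i = 0 <;> by_cases hj0 : j = 0 <;>
        simp only [hc, hi0, hj0, true_or, if_true, show i ≠ ℓ + 2 by omega,
          show j ≠ ℓ + 2 by omega, or_false, if_false] at h ⊢
      · exact absurd h.symm (hb _ (by omega))
      · exact absurd h (hb _ (by omega))
      · have := hg.injOn (show i - 1 ≤ ℓ by simp; omega) (show j - 1 ≤ ℓ by simp; omega) h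
        omega
    · rcases Nat.eq_zero_or_pos i with rfl | hi0
      · simpa [hc] using h0
      rcases (show i ≤ ℓ + 1 by omega).lt_or_eq with hiℓ | rfl
      · simpa [hc, show i ≠ 0 by omega, show i ≠ ℓ + 2 by omega, show i ≠ ℓ + 1 by omega,
          show i - 1 + 1 = i by omega] using hg.adj (i - 1) (by omega)
      · simpa [hc] using hl.symm
  obtain ⟨i, j, hij, hj, hw, hadj⟩ := hH.exists_chord_of_isNatCycle (by omega) hcyc
  simp only [hc, show j ≠ 0 by omega, show j ≠ ℓ + 2 by omega, or_self, if_false] at hadj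
  rcases Nat.eq_zero_or_pos i with rfl | hi0
  · exact ⟨j - 1, by omega, by omega, by simpa using hadj⟩
  · simp only [show i ≠ 0 by omega, show i ≠ ℓ + 2 by omega, or_self, if_false] at hadj
    exact absurd hadj (hg.not_adj _ _ (by omega) (by omega))

lemma IsChordal.adj_of_isInducedPath (hH : IsChordal H) {b : V} {ℓ : ℕ} :
    ∀ {g : ℕ → V}, IsInducedPath H g ℓ → (∀ t ≤ ℓ, g t ≠ b) → H.Adj b (g 0) →
      H.Adj b (g ℓ) → ∀ t ≤ ℓ, H.Adj b (g t) := by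
  induction ℓ using Nat.strong_induction_on with
  | _ ℓ ih =>
  intro g hg hb h0 hl t ht
  rcases Nat.lt_or_ge ℓ 2 with hℓ | hℓ
  · obtain rfl | rfl : t = 0 ∨ t = ℓ := by omega
    exacts [h0, hl]
  obtain ⟨s, hs0, hsℓ, hbs⟩ := hH.exists_adj_of_isInducedPath hg hℓ hb h0 hl
  rcases le_total t s with hts | hst
  · exact ih s hsℓ (hg.mono hsℓ.le) (fun t' ht' => hb t' (by omega)) h0 hbs t hts
  · have := ih (ℓ - s) (by omega) (hg.shift hsℓ.le) (fun t' ht' => hb _ (by omega))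
      (by simpa using hbs) (by simpa [show s + (ℓ - s) = ℓ by omega] using hl) (t - s) (by omega)
    simpa [show s + (t - s) = t by omega] using this

lemma exists_isInducedPath {D : Set V} {x y : D} (p : (H.induce D).Walk x y) {a : V}
    (ha : a ∉ D) (hya : H.Adj y a) :
    ∃ m g, g 0 = (x : V) ∧ g (m + 1) = a ∧ (∀ i ≤ m, g i ∈ D) ∧ IsInducedPath H g (m + 1) := by
  have hex : ∃ m, ∃ g : ℕ → V, g 0 = x ∧ g (m + 1) = a ∧
      ∀ i ≤ m, g i ∈ D ∧ H.Adj (g i) (g (i + 1)) := by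
    refine ⟨p.length, fun i => if i ≤ p.length then p.getVert i else a, by simp, by simp,
      fun i hi => ⟨by simp [hi], ?_⟩⟩
    rcases hi.lt_or_eq with hi | rfl
    · simpa [hi.le, Nat.succ_le_of_lt hi] using p.adj_getVert_succ hi
    · simpa using hya
  obtain ⟨g, hg0, hga, hg⟩ := Nat.find_spec hex
  set m := Nat.find hex
  -- a chord `g i ~ g j` of the walk would make it shorter
  have hnot (i j : ℕ) (hij : i + 2 ≤ j) (hj : j ≤ m + 1) : ¬H.Adj (g i) (g j) := by
    intro hadj
    refine Nat.find_min hex (m := m - (j - i - 1)) (by omega)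
      ⟨fun t => if t ≤ i then g t else g (t + (j - i - 1)), by simpa using hg0, ?_, ?_⟩
    · simpa [show ¬(m - (j - i - 1) + 1 ≤ i) by omega,
        show m - (j - i - 1) + 1 + (j - i - 1) = m + 1 by omega] using hga
    · intro t ht
      rcases lt_trichotomy t i with hti | rfl | hti
      · simpa [hti.le, Nat.succ_le_of_lt hti] using hg t (by omega)
      · simpa [show t + 1 + (j - t - 1) = j by omega] using ⟨(hg t (by omega)).1, hadj⟩
      · simpa [show ¬t ≤ i by omega, show ¬t + 1 ≤ i by omega, show t + 1 + (j - i - 1) =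
          t + (j - i - 1) + 1 by omega] using hg (t + (j - i - 1)) (by omega)
  have hne (i j : ℕ) (hij : i < j) (hj : j ≤ m + 1) : g i ≠ g j := by
    intro h
    rcases hj.lt_or_eq with hj | rfl
    · exact hnot i (j + 1) (by omega) (by omega) (h ▸ (hg j (by omega)).2)
    · exact ha (hga ▸ h ▸ (hg i (by omega)).1)
  refine ⟨m, g, hg0, hga, fun i hi => (hg i hi).1, ⟨fun i hi j hj h => ?_,
    fun i hi => (hg i (by omega)).2, hnot⟩⟩
  simp only [Set.mem_Iic] at hi hj
  by_contra hij
  rcases Nat.lt_or_gt_of_ne hij with hij | hij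
  exacts [hne i j hij hj h, hne j i hij hi h.symm]

lemma IsChordal.exists_forall_adj [Finite V] (hH : IsChordal H) {K D : Set V}
    (hK : H.IsClique K) (hD : (H.induce D).Connected) (hDK : Disjoint D K)
    (hN : ∀ k ∈ K, ∃ w ∈ D, H.Adj w k) : ∃ u ∈ D, ∀ k ∈ K, H.Adj u k := by
  obtain ⟨u, huD, hu⟩ := Set.exists_max_image D (fun u => (K ∩ H.neighborSet u).ncard)
    D.toFinite (let ⟨x⟩ := hD.nonempty; ⟨x, x.2⟩)
  refine ⟨u, huD, fun a haK => by_contra fun hua => ?_⟩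
  obtain ⟨w, hwD, hwa⟩ := hN a haK
  obtain ⟨m, g, hg0, hga, hgD, hg⟩ := exists_isInducedPath
    (hD.preconnected ⟨u, huD⟩ ⟨w, hwD⟩).some (Set.disjoint_right.1 hDK haK) hwa
  -- the last vertex `g m` of a shortest path from `u` to `a` sees more of `K` than `u`
  have hsub : K ∩ H.neighborSet u ⊂ K ∩ H.neighborSet (g m) := by
    refine ⟨fun b ⟨hbK, hub⟩ => ⟨hbK, ?_⟩, fun h => hua (h ⟨haK, ?_⟩).2⟩
    · have hba : b ≠ a := fun h => hua (h ▸ hub)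
      refine (hH.adj_of_isInducedPath hg (fun t ht => ?_) (hg0 ▸ hub.symm)
        (hga ▸ hK hbK haK hba) m (by omega)).symm
      rcases ht.lt_or_eq with ht | rfl
      · exact hDK.ne_of_mem (hgD t (by omega)) hbK
      · exact hga ▸ hba.symm
    · rw [mem_neighborSet, ← hga]
      exact hg.adj m (by omega)
  exact (hu _ (hgD m le_rfl)).not_gt (Set.ncard_lt_ncard hsub (Set.toFinite _))

end InducedPaths

section Triangulations

variable {G H : SimpleGraph V}

lemma exists_isCompOf (G : SimpleGraph V) {X : Set V} {v : V} (hv : v ∉ X) :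
    ∃ C, v ∈ C ∧ IsCompOf G X C := by
  set C := {w | ∃ p : G.Walk v w, ∀ z ∈ p.support, z ∉ X}
  have hsupp {w : V} (p : G.Walk v w) (hp : ∀ z ∈ p.support, z ∉ X) :
      {z | z ∈ p.support} ⊆ C :=
    fun z hz => ⟨p.takeUntil z hz, fun y hy => hp y (p.support_takeUntil_subset_support hz hy)⟩
  have hvC : v ∈ C := ⟨.nil, by simpa⟩
  refine ⟨C, hvC, ⟨v, hvC⟩, Set.disjoint_left.2 fun w ⟨p, hp⟩ => hp w p.end_mem_support,
    G.induce_connected_of_patches v hvC fun ⟨p, hp⟩ => ⟨_, hsupp p hp, p.start_mem_support,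
      p.end_mem_support, p.connected_induce_support.preconnected _ _⟩, ?_⟩
  rintro u ⟨p, hp⟩ w hw huw
  refine ⟨p.concat huw, fun z hz => ?_⟩
  rw [Walk.support_concat, List.mem_append, List.mem_singleton] at hz
  rcases hz with hz | rfl
  exacts [hp z hz, hw]

lemma IsCompOf.nbhd_subset {X C : Set V} (hC : IsCompOf G X C) : nbhd G C ⊆ X :=
  fun y ⟨hyC, u, huC, huy⟩ => by_contra fun hyX => hyC (hC.2.2.2 u huC y hyX huy)

lemma IsMaxClique.not_isFullCompOf [Finite V] (hH : IsTri G H) {Ω C : Set V}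
    (hΩ : IsMaxClique H Ω) : ¬IsFullCompOf G Ω C := by
  rintro ⟨hC, rfl⟩
  obtain ⟨u, huC, hu⟩ := hH.1.exists_forall_adj hΩ.1 (hC.2.2.1.mono fun _ _ h => hH.2 h) hC.2.1
    fun k ⟨_, w, hw, hwk⟩ => ⟨w, hw, hH.2 hwk⟩
  have := hΩ.2 _ (hΩ.1.insert fun k hk _ => hu k hk) (Set.subset_insert u _)
  exact (this ▸ Set.mem_insert u _ : u ∈ nbhd G C).1 huC

lemma IsMinTri.mem_closedNbhd_of_adj (hH : IsMinTri G H) {D : Set V}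
    (hD : H.IsClique (nbhd G D)) {u w : V} (hu : u ∈ D) (huw : H.Adj u w) :
    w ∈ closedNbhd G D := by
  have hAB : closedNbhd G D ∩ Dᶜ = nbhd G D := by
    ext y
    exact ⟨fun ⟨hy, hyD⟩ => hy.resolve_left hyD, fun hy => ⟨Or.inr hy, hy.1⟩⟩
  have hcl {x y : V} (hx : x ∈ D) (hxy : G.Adj x y) : y ∈ closedNbhd G D := by
    by_cases hy : y ∈ D
    exacts [Or.inl hy, Or.inr ⟨hy, x, hx, hxy⟩]
  -- deleting the edges from `D` to the complement of `closedNbhd G D` keeps a triangulation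
  have hG : G ≤ inducedOn H (closedNbhd G D) ⊔ inducedOn H Dᶜ := by
    intro x y hxy
    by_cases hx : x ∈ D
    · exact Or.inl ⟨hH.1.2 hxy, Or.inl hx, hcl hx hxy⟩
    by_cases hy : y ∈ D
    · exact Or.inl ⟨hH.1.2 hxy, hcl hy hxy.symm, Or.inl hy⟩
    exact Or.inr ⟨hH.1.2 hxy, hx, hy⟩
  have heq := hH.2 _ ⟨hH.1.1.inducedOn_sup (hAB ▸ hD), hG⟩ fun x y h => h.elim (·.1) (·.1)
  rw [← heq] at huw
  exact huw.elim (·.2.2) fun h => absurd hu h.2.1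

lemma IsTri.exists_isMinTri_le [Finite V] (h : IsTri G H) : ∃ H₀ ≤ H, IsMinTri G H₀ := by
  obtain ⟨H₀, hle, hmin⟩ := Set.Finite.exists_le_minimal (Set.toFinite {H' | IsTri G H'}) h
  exact ⟨H₀, hle, hmin.prop, fun H' hH' hle' => le_antisymm hle' (hmin.le_of_le hH' hle')⟩

lemma exists_isMaxClique_superset [Finite V] {C : Set V}
    (hC : H.IsClique C) : ∃ M, C ⊆ M ∧ IsMaxClique H M := by
  obtain ⟨M, hCM, hM⟩ := Finite.exists_le_maximal (p := H.IsClique) hC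
  exact ⟨M, hCM, hM.prop, fun M' hM' hle => (hM.eq_of_le hM' hle).symm⟩

lemma IsMinTri.exists_isMinTri_induce_eq [Finite V] {s : Set V} {H' : SimpleGraph s}
    (hH' : IsMinTri (G.induce s) H') : ∃ H, IsMinTri G H ∧ H.induce s = H' := by
  -- take a minimal triangulation of `G` below `H'` with all vertices outside `s` made universal
  set H₂ := H'.map (Function.Embedding.subtype s) ⊔ fromRel fun a _ => a ∉ s
  have hG : G ≤ H₂ := by
    intro x y hxy
    by_cases hxy' : x ∈ s ∧ y ∈ s
    · have : (G.induce s).Adj ⟨x, hxy'.1⟩ ⟨y, hxy'.2⟩ := hxy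
      exact Or.inl (map_adj_apply.2 (hH'.1.2 this))
    · exact Or.inr ⟨hxy.ne, not_and_or.1 hxy'⟩
  obtain ⟨H, hle, hH⟩ := IsTri.exists_isMinTri_le ⟨(hH'.1.1.map _).sup_fromRel _, hG⟩
  refine ⟨H, hH, hH'.2 _ ⟨hH.1.1.comap (Function.Embedding.subtype s).injective,
    fun a b h => hH.1.2 h⟩ fun a b h => ?_⟩
  rcases hle h with h | ⟨-, h | h⟩
  exacts [map_adj_apply.1 h, absurd a.2 h, absurd b.2 h]

lemma IsMaxClique.inter_eq_image {s : Set V} {Ω : Set s} (hΩ : IsMaxClique (H.induce s) Ω)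
    {M : Set V} (hM : H.IsClique M) (hΩM : Subtype.val '' Ω ⊆ M) :
    M ∩ s = Subtype.val '' Ω := by
  have hMΩ : {a : s | a.1 ∈ M} = Ω := hΩ.2 _
    (fun a ha b hb hab => hM ha hb (Subtype.val_injective.ne hab)) fun a ha => hΩM ⟨a, ha, rfl⟩
  ext y
  refine ⟨fun ⟨hyM, hys⟩ => ⟨⟨y, hys⟩, hMΩ ▸ hyM, rfl⟩, ?_⟩
  rintro ⟨a, ha, rfl⟩
  exact ⟨hΩM ⟨a, ha, rfl⟩, a.2⟩

theorem not_isPMC_insert [Finite V] {Ω : Set V} {v : V} (hv : v ∉ Ω) (hΩ : IsPMC G Ω) :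
    ¬IsPMC G (insert v Ω) := by
  rintro ⟨H, hH, hvΩ, -⟩
  obtain ⟨H₁, hH₁, hΩ₁⟩ := hΩ
  obtain ⟨C, hvC, hC⟩ := exists_isCompOf G hv
  obtain ⟨x, hxΩ, hx⟩ : ∃ x ∈ Ω, x ∉ nbhd G C := by
    by_contra! h
    exact hΩ₁.not_isFullCompOf hH₁.1 ⟨hC, hC.nbhd_subset.antisymm h⟩
  have hvx : H.Adj v x := hvΩ (Set.mem_insert v Ω) (Set.mem_insert_of_mem v hxΩ)
    (ne_of_mem_of_not_mem hxΩ hv).symm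
  rcases hH.mem_closedNbhd_of_adj (hvΩ.subset (hC.nbhd_subset.trans (Set.subset_insert v Ω)))
    hvC hvx with hxC | hxN
  exacts [Set.disjoint_left.1 hC.2.1 hxC hxΩ, hx hxN]

end Triangulations

theorem pmc_induced_general {V : Type*} [Fintype V] (G : SimpleGraph V) (v : V)
    (Ω : Set ↥({v}ᶜ : Set V)) (hΩ : IsPMC (G.induce ({v}ᶜ : Set V)) Ω) :
    Xor' (IsPMC G (Subtype.val '' Ω)) (IsPMC G (insert v (Subtype.val '' Ω))) := by
  obtain ⟨H', hH', hΩH'⟩ := hΩ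
  obtain ⟨H, hH, rfl⟩ := hH'.exists_isMinTri_induce_eq
  have hΩH : H.IsClique (Subtype.val '' Ω) := by
    rintro _ ⟨a, ha, rfl⟩ _ ⟨b, hb, rfl⟩ hab
    exact hΩH'.1 ha hb (ne_of_apply_ne _ hab)
  obtain ⟨M, hΩM, hM⟩ := exists_isMaxClique_superset hΩH
  have hMΩ := hΩH'.inter_eq_image hM.1 hΩM
  have hv : v ∉ Subtype.val '' Ω := fun ⟨a, _, ha⟩ => a.2 ha
  refine (xor_iff_or_and_not_and _ _).2 ⟨?_, fun h => not_isPMC_insert hv h.1 h.2⟩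
  by_cases hvM : v ∈ M
  · right
    rw [← hMΩ, ← Set.sdiff_eq, Set.insert_sdiff_singleton, Set.insert_eq_of_mem hvM]
    exact ⟨H, hH, hM⟩
  · left
    rw [← hMΩ, Set.inter_eq_left.2 (Set.subset_compl_singleton_iff.2 hvM)]
    exact ⟨H, hH, hM⟩

/-- If `Ω` is a PMC of the induced subgraph `G \ {v}`, then exactly one
of `Ω` and `Ω ∪ {v}` is a PMC of `G`. -/
theorem pmc_induced {V : Type*} [Fintype V] [DecidableEq V] (G : SimpleGraph V) (v : V)
    (Ω : Set ↥({v}ᶜ : Set V)) (hΩ : IsPMC (G.induce ({v}ᶜ : Set V)) Ω) :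
    Xor' (IsPMC G (Subtype.val '' Ω)) (IsPMC G (insert v (Subtype.val '' Ω))) :=
  pmc_induced_general G v Ω hΩ

end PaperECC
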